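/- arXiv:1304.7375 — 6 statements merged into one kernel-verified Lean document; each statement's English description precedes it below -/
import Mathlib

section
/- Let M ≥ 1 be an integer and let r : ℤ × ℤ → ℂ satisfy r(n + M, m + M) = r(n, m) for all n, m ∈ ℤ. Then there exist functions r_0, …, r_{M−1} : ℤ → ℂ such that r(n, m) = ∑_{k=0}^{M−1} r_k(n − m) · exp(2πi·k·n/M) for all n, m ∈ ℤ. -/
/-!
Along each diagonal `n - m = d` the function `n ↦ r (n, n - d)` is `M`-periodic, hence a function
on `ZMod M`, and Fourier inversion on `ZMod M` writes it as a combination of the characters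
`n ↦ exp (2πi k n / M)`; the coefficients of the diagonal `d` are the `c k d`.
-/

open Complex ZMod Real

namespace ZMod

lemma bijective_natCast_comp_val_fin (M : ℕ) [NeZero M] :
    Function.Bijective fun k : Fin M ↦ ((k : ℕ) : ZMod M) := by
  refine (Fintype.bijective_iff_injective_and_card _).mpr ⟨fun k l hkl ↦ Fin.ext ?_, by simp⟩
  simpa only [ZMod.val_cast_of_lt k.isLt, ZMod.val_cast_of_lt l.isLt] using congrArg ZMod.val hkl

end ZMod

namespace Function.Periodic

lemma exists_eq_comp_intCast {α : Type*} {M : ℕ} [NeZero M] {f : ℤ → α} (hf : Periodic f M) :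
    ∃ F : ZMod M → α, ∀ n : ℤ, f n = F n := by
  refine ⟨fun x ↦ f x.val, fun n ↦ ?_⟩
  show f n = f ((n : ZMod M).val : ℤ)
  rw [ZMod.val_intCast, Int.emod_def, mul_comm]
  exact (hf.sub_int_mul_eq (n / M)).symm

lemma exists_eq_sum_exp {M : ℕ} [NeZero M] {f : ℤ → ℂ} (hf : Periodic f M) :
    ∃ c : Fin M → ℂ, ∀ n : ℤ,
      f n = ∑ k : Fin M, c k * exp (2 * π * I * ((k : ℕ) : ℂ) * n / M) := by
  obtain ⟨F, hF⟩ := hf.exists_eq_comp_intCast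
  refine ⟨fun k ↦ (M : ℂ)⁻¹ * 𝓕 F k, fun n ↦ ?_⟩
  rw [hF, ← congrFun (dft.symm_apply_apply F) n, invDFT_apply, smul_eq_mul, Finset.mul_sum,
    ← Fintype.sum_bijective _ (bijective_natCast_comp_val_fin M) _ _ fun _ ↦ rfl]
  refine Finset.sum_congr rfl fun k _ ↦ ?_
  have hchar : stdAddChar ((k : ℕ) * n : ZMod M) = exp (2 * π * I * ((k : ℕ) : ℂ) * n / M) := by
    simpa [mul_assoc] using stdAddChar_coe (N := M) ((k : ℕ) * n)
  rw [smul_eq_mul, hchar]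
  ring

end Function.Periodic

/-- For `r : ℤ × ℤ → ℂ` jointly periodic with period `M ≥ 1`
(in the sense `r (n + M, m + M) = r (n, m)`), there exist coefficient functions
`c k : ℤ → ℂ`, `k = 0, …, M−1`, with
`r (n, m) = ∑_{k<M} c k (n − m) · exp(2πi k n / M)`. -/
theorem cyclostationary_fourier_series_expansion
    (M : ℕ) (hM : 1 ≤ M) (r : ℤ × ℤ → ℂ)
    (hper : ∀ n m : ℤ, r (n + (M : ℤ), m + (M : ℤ)) = r (n, m)) :
    ∃ c : Fin M → (ℤ → ℂ), ∀ n m : ℤ,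
      r (n, m) = ∑ k : Fin M,
        c k (n - m) *
          Complex.exp (2 * (Real.pi : ℂ) * Complex.I * ((k : ℕ) : ℂ) * (n : ℂ) / (M : ℂ)) := by
  have : NeZero M := ⟨by omega⟩
  have hdiag : ∀ d : ℤ, Function.Periodic (fun n ↦ r (n, n - d)) M := fun d n ↦ by
    simpa only [sub_add_eq_add_sub] using hper n (n - d)
  choose c hc using fun d ↦ (hdiag d).exists_eq_sum_exp
  refine ⟨fun k d ↦ c d k, fun n m ↦ ?_⟩
  simpa only [sub_sub_cancel] using hc (n - m) n
end

section
/- Let M be a positive integer and N a positive even integer. For every x ∈ ℂ^{MN}, the asymptotic FRESH properizer f is inverted by the map f⁻¹(y) := W_{MN}ᴴ (G_{M,N} W_{MN} y + P_{MN} G_{M,N} S_{M,N}ᵀ conj(W_{MN}) conj(y)); that is, f⁻¹(f(x)) = x. -/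
/-
The four matrices satisfy a few algebraic relations: `W` is symmetric and unitary, so
`Wᴴ = conj W`; the backward identity `P` maps `W` to `conj W` and `G` to its complement,
`P G P = 1 - G`; `S` is a real permutation matrix; and, `N` being even, the shift by `N/2`
moves the support of `G` off itself, `G S G = 0`. For `y = f(x)` one has
`W y = G W x + S G W conj(x)`, hence `G W y = G W x` and
`P G Sᵀ conj(W) conj(y) = P G conj(W) x = (1 - G) W x`; the two pieces add up to `W x`.
-/

open Matrix

/-- The centered DFT matrix `W_L`: its `(m,n)` entry, for 1-indexed
`m, n ∈ {1, …, L}`, is `(1/√L) · exp(−2πi (m − c_L)(n − c_L) / L)` with `c_L = (L+1)/2`. -/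
noncomputable def cdft (L : ℕ) : Matrix (Fin L) (Fin L) ℂ :=
  Matrix.of fun m n : Fin L =>
    ((1 / Real.sqrt L : ℝ) : ℂ) *
      Complex.exp (-(2 * (Real.pi : ℂ) * Complex.I) *
        (((m.1 : ℂ) + 1) - ((L : ℂ) + 1) / 2) *
        (((n.1 : ℂ) + 1) - ((L : ℂ) + 1) / 2) / (L : ℂ))

/-- The RSW matrix `G_{M,N}`: the `MN×MN` 0-1 diagonal matrix
`I_M ⊗ [[O_{N/2}, O_{N/2}],[O_{N/2}, I_{N/2}]]`, i.e. the diagonal entry at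
(0-based) index `i` is `1` iff `i mod N ≥ N/2`. -/
def rsw (M N : ℕ) : Matrix (Fin (M * N)) (Fin (M * N)) ℂ :=
  Matrix.of fun i j : Fin (M * N) => if i = j ∧ N / 2 ≤ i.1 % N then 1 else 0

/-- The circular-shift matrix `S_{M,N}`: its (0-based) `(i,j)` entry is `1`
iff `j ≡ i + N/2 (mod MN)`. -/
def shiftMat (M N : ℕ) : Matrix (Fin (M * N)) (Fin (M * N)) ℂ :=
  Matrix.of fun i j : Fin (M * N) => if j.1 = (i.1 + N / 2) % (M * N) then 1 else 0

/-- The backward identity matrix `P_L`: its `(m,n)` entry (1-indexed) is `1`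
if `m + n = L + 1` and `0` otherwise. -/
def bkId (L : ℕ) : Matrix (Fin L) (Fin L) ℂ :=
  Matrix.of fun m n : Fin L => if (m.1 + 1) + (n.1 + 1) = L + 1 then 1 else 0

/-- The asymptotic FRESH properizer with parameters `M` and `N`:
`f(x) = W_{MN}ᴴ (G_{M,N} W_{MN} x + S_{M,N} G_{M,N} W_{MN} conj(x))`. -/
noncomputable def fresh (M N : ℕ) (x : Fin (M * N) → ℂ) : Fin (M * N) → ℂ :=
  Matrix.mulVec (cdft (M * N))ᴴ
    (Matrix.mulVec (rsw M N * cdft (M * N)) x +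
      Matrix.mulVec (shiftMat M N * rsw M N * cdft (M * N)) (star x))

/-- The inverse map
`f⁻¹(y) = W_{MN}ᴴ (G_{M,N} W_{MN} y + P_{MN} G_{M,N} S_{M,N}ᵀ conj(W_{MN}) conj(y))`. -/
noncomputable def freshInv (M N : ℕ) (y : Fin (M * N) → ℂ) : Fin (M * N) → ℂ :=
  Matrix.mulVec (cdft (M * N))ᴴ
    (Matrix.mulVec (rsw M N * cdft (M * N)) y +
      Matrix.mulVec
        (bkId (M * N) * rsw M N * (shiftMat M N)ᵀ * (cdft (M * N)).map (starRingEnd ℂ))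
        (star y))

section Properizer

variable {n R : Type*} [Fintype n] [CommRing R] [StarRing R]

theorem Matrix.star_mulVec_eq_map (A : Matrix n n R) (v : n → R) :
    star (A *ᵥ v) = A.map (starRingEnd R) *ᵥ star v := by
  ext i
  exact RingHom.map_mulVec (starRingEnd R) A v i

variable [DecidableEq n]

theorem properizer_inverse {W G S P : Matrix n n R} (hW : Wᴴ * W = 1) (hWt : Wᵀ = W)
    (hPW : P * W = W.map (starRingEnd R)) (hPP : P * P = 1)
    (hGG : G * G = G) (hGt : Gᵀ = G) (hG : G.map (starRingEnd R) = G)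
    (hS : S.map (starRingEnd R) = S) (hSS : Sᵀ * S = 1) (hGSG : G * S * G = 0)
    (hPGP : P * G * P = 1 - G) {x y : n → R}
    (hy : y = Wᴴ *ᵥ ((G * W) *ᵥ x + (S * G * W) *ᵥ star x)) :
    Wᴴ *ᵥ ((G * W) *ᵥ y + (P * G * Sᵀ * W.map (starRingEnd R)) *ᵥ star y) = x := by
  set Wc := W.map (starRingEnd R)
  have hWc : Wᴴ = Wc := by rw [conjTranspose, hWt]; rfl
  have hWcW : Wc * W = 1 := hWc ▸ hW
  have hWWc : W * Wc = 1 := mul_eq_one_comm.mp hWcW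
  have hPWc : P * Wc = W := by rw [← hPW, ← Matrix.mul_assoc, hPP, Matrix.one_mul]
  have hGStG : G * Sᵀ * G = 0 := by
    rw [← transpose_zero, ← hGSG, transpose_mul, transpose_mul, hGt, Matrix.mul_assoc]
  have cancel : ∀ {A B : Matrix n n R}, A * B = 1 → ∀ Z, A * (B * Z) = Z := fun h Z => by
    rw [← Matrix.mul_assoc, h, Matrix.one_mul]
  have hWy : W *ᵥ y = (G * W) *ᵥ x + (S * G * W) *ᵥ star x := by
    rw [hy, hWc, mulVec_mulVec, hWWc, one_mulVec]
  have hWcy : Wc *ᵥ star y = (G * Wc) *ᵥ star x + (S * G * Wc) *ᵥ x := by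
    rw [(star_mulVec_eq_map W y).symm, hWy, star_add, star_mulVec_eq_map, star_mulVec_eq_map,
      star_star, Matrix.map_mul, Matrix.map_mul, Matrix.map_mul, hG, hS]
  have hGWy : G *ᵥ (W *ᵥ y) = (G * W) *ᵥ x := by
    rw [hWy, mulVec_add, mulVec_mulVec, mulVec_mulVec, ← Matrix.mul_assoc, hGG,
      ← Matrix.mul_assoc, ← Matrix.mul_assoc, hGSG, Matrix.zero_mul, zero_mulVec, add_zero]
  have hPGSy : (P * G * Sᵀ) *ᵥ (Wc *ᵥ star y) = ((1 - G) * W) *ᵥ x := by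
    have hfirst : P * G * Sᵀ * (G * Wc) = 0 := calc
      _ = P * (G * Sᵀ * G) * Wc := by simp only [Matrix.mul_assoc]
      _ = 0 := by rw [hGStG, Matrix.mul_zero, Matrix.zero_mul]
    have hsecond : P * G * Sᵀ * (S * G * Wc) = (1 - G) * W := calc
      _ = P * (G * G) * Wc := by simp only [Matrix.mul_assoc, cancel hSS]
      _ = P * G * P * (P * Wc) := by rw [hGG]; simp only [Matrix.mul_assoc, cancel hPP]
      _ = (1 - G) * W := by rw [hPGP, hPWc]
    rw [hWcy, mulVec_add, mulVec_mulVec, mulVec_mulVec, hfirst, hsecond, zero_mulVec, zero_add]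
  rw [hWc, ← mulVec_mulVec, ← mulVec_mulVec, hGWy, hPGSy, ← add_mulVec, ← Matrix.add_mul,
    add_sub_cancel, Matrix.one_mul, mulVec_mulVec, hWcW, one_mulVec]

end Properizer

open Complex Real

theorem Complex.sum_exp_two_pi_I_mul_div_eq_zero {L : ℕ} {d : ℤ} (hd : ¬ (L : ℤ) ∣ d) :
    ∑ k : Fin L, exp (2 * π * I * d * k / L) = 0 := by
  rcases Nat.eq_zero_or_pos L with rfl | hL
  · simp
  have hζ := isPrimitiveRoot_exp L hL.ne'
  set ω := exp (2 * π * I / L) ^ d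
  have hω : ω ≠ 1 := fun h => hd ((hζ.zpow_eq_one_iff_dvd d).mp h)
  have hωL : ω ^ L = 1 := by
    rw [← zpow_natCast, ← _root_.zpow_mul, mul_comm d, _root_.zpow_mul, zpow_natCast,
      hζ.pow_eq_one, _root_.one_zpow]
  have hterm : ∀ k : ℕ, exp (2 * π * I * d * k / L) = ω ^ k := fun k => by
    rw [← zpow_natCast, ← _root_.zpow_mul, ← exp_int_mul]
    congr 1
    push_cast
    ring
  simp only [hterm, Fin.sum_univ_eq_sum_range (ω ^ ·), geom_sum_eq hω, hωL, sub_self, zero_div]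

theorem starRingEnd_cdft_apply (L : ℕ) (m n : Fin L) :
    starRingEnd ℂ (cdft L m n) = ((1 / Real.sqrt L : ℝ) : ℂ) *
      exp (2 * π * I * (((m.1 : ℂ) + 1) - ((L : ℂ) + 1) / 2) *
        (((n.1 : ℂ) + 1) - ((L : ℂ) + 1) / 2) / L) := by
  simp only [cdft, of_apply, map_mul, conj_ofReal, ← exp_conj, map_div₀, map_neg, conj_I,
    map_sub, map_add, map_natCast, map_one, map_ofNat]
  ring_nf

theorem cdft_rev_apply (L : ℕ) (m n : Fin L) : cdft L m.rev n = starRingEnd ℂ (cdft L m n) := by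
  rw [starRingEnd_cdft_apply, cdft, of_apply, Fin.val_rev, Nat.cast_sub (by omega)]
  push_cast
  ring_nf

theorem cdft_transpose (L : ℕ) : (cdft L)ᵀ = cdft L := by
  ext m n
  simp only [cdft, transpose_apply, of_apply]
  ring_nf

theorem conjTranspose_cdft_mul_cdft (L : ℕ) : (cdft L)ᴴ * cdft L = 1 := by
  rcases Nat.eq_zero_or_pos L with rfl | hL
  · exact Subsingleton.elim _ _
  have hL' : (L : ℂ) ≠ 0 := by exact_mod_cast hL.ne'
  ext i j
  set d : ℤ := i.1 - j.1
  have hterm : ∀ k : Fin L, star (cdft L k i) * cdft L k j =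
      (1 / L * exp (π * I * (1 - L) * d / L)) * exp (2 * π * I * d * k / L) := fun k => by
    rw [star_def, starRingEnd_cdft_apply, cdft, of_apply, mul_mul_mul_comm, ← ofReal_mul,
      one_div_mul_one_div, Real.mul_self_sqrt L.cast_nonneg, ← Complex.exp_add,
      mul_assoc (1 / (L : ℂ)), ← Complex.exp_add]
    push_cast [d]
    ring_nf
  simp only [mul_apply, conjTranspose_apply, hterm, ← Finset.mul_sum]
  by_cases hij : i = j
  · subst hij
    simp [d, inv_mul_cancel₀ hL']
  · rw [Complex.sum_exp_two_pi_I_mul_div_eq_zero, mul_zero, one_apply_ne hij]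
    intro hdvd
    have hd0 := Int.eq_zero_of_abs_lt_dvd hdvd (abs_lt.mpr ⟨by omega, by omega⟩)
    exact hij (Fin.ext (by omega))

theorem add_half_mod_lt_half {N i : ℕ} (hN0 : 0 < N) (hN : Even N) (hi : N / 2 ≤ i % N) :
    (i + N / 2) % N < N / 2 := by
  obtain ⟨q, rfl⟩ := hN
  rw [show (q + q) / 2 = q by omega] at *
  have hlt : i % (q + q) < q + q := Nat.mod_lt _ (by omega)
  rw [Nat.add_mod, Nat.mod_eq_of_lt (by omega : q < q + q),
    Nat.mod_eq_sub_mod (by omega), Nat.mod_eq_of_lt (by omega)]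
  omega

theorem sub_add_one_mod_of_dvd {L N i : ℕ} (hNL : N ∣ L) (hi : i < L) :
    (L - (i + 1)) % N = N - 1 - i % N := by
  obtain ⟨k, rfl⟩ := hNL
  have hN : 0 < N := Nat.pos_of_ne_zero (by rintro rfl; simp at hi)
  have hik : i / N + 1 ≤ k := Nat.div_lt_of_lt_mul hi
  have hdiv := Nat.div_add_mod i N
  have hmod := Nat.mod_lt i hN
  have hle := Nat.mul_le_mul_left N hik
  rw [show N * k - (i + 1) = (N - 1 - i % N) + N * (k - (i / N + 1)) by
    rw [Nat.mul_sub, Nat.mul_add, Nat.mul_one] at *; omega]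
  rw [Nat.add_mul_mod_self_left, Nat.mod_eq_of_lt (by omega)]

theorem bkId_eq_permMatrix (L : ℕ) :
    bkId L = (Fin.revPerm : Equiv.Perm (Fin L)).permMatrix ℂ := by
  ext i j
  simp only [bkId, of_apply, Equiv.Perm.permMatrix, PEquiv.toMatrix_apply, Equiv.toPEquiv_apply,
    Option.mem_some_iff, Fin.revPerm_apply, Fin.ext_iff, Fin.val_rev]
  congr 1
  apply propext
  omega

theorem bkId_mul (L : ℕ) (A : Matrix (Fin L) (Fin L) ℂ) :
    bkId L * A = A.submatrix Fin.rev id := by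
  rw [bkId_eq_permMatrix, PEquiv.toMatrix_toPEquiv_mul]
  rfl

theorem mul_bkId (L : ℕ) (A : Matrix (Fin L) (Fin L) ℂ) :
    A * bkId L = A.submatrix id Fin.rev := by
  rw [bkId_eq_permMatrix, PEquiv.mul_toMatrix_toPEquiv]
  rfl

theorem bkId_mul_bkId (L : ℕ) : bkId L * bkId L = 1 := by
  rw [bkId_mul, bkId_eq_permMatrix]
  ext i j
  simp [Equiv.Perm.permMatrix, PEquiv.toMatrix_apply, one_apply]

theorem bkId_mul_cdft (L : ℕ) : bkId L * cdft L = (cdft L).map (starRingEnd ℂ) := by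
  rw [bkId_mul]
  ext m n
  exact cdft_rev_apply L m n

theorem shiftMat_eq_permMatrix (M N : ℕ) [NeZero (M * N)] :
    shiftMat M N = (Equiv.addRight (Fin.ofNat (M * N) (N / 2))).permMatrix ℂ := by
  ext i j
  simp only [shiftMat, of_apply, Equiv.Perm.permMatrix, PEquiv.toMatrix_apply,
    Equiv.toPEquiv_apply, Option.mem_some_iff, Equiv.coe_addRight, Fin.ext_iff, Fin.val_add,
    Fin.val_ofNat, Nat.add_mod_mod]
  simp only [eq_comm]

theorem shiftMat_transpose_mul_self (M N : ℕ) : (shiftMat M N)ᵀ * shiftMat M N = 1 := by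
  rcases Nat.eq_zero_or_pos (M * N) with h | h
  · ext i
    exact absurd i.isLt (by omega)
  have : NeZero (M * N) := ⟨h.ne'⟩
  rw [shiftMat_eq_permMatrix, transpose_permMatrix, ← permMatrix_mul, mul_inv_cancel,
    permMatrix_one]

theorem shiftMat_map_star (M N : ℕ) : (shiftMat M N).map (starRingEnd ℂ) = shiftMat M N := by
  ext i j
  simp only [shiftMat, map_apply, of_apply, apply_ite (starRingEnd ℂ), map_one, map_zero]

theorem rsw_eq_diagonal (M N : ℕ) :
    rsw M N = diagonal fun i : Fin (M * N) => if N / 2 ≤ i.1 % N then 1 else 0 := by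
  ext i j
  simp only [rsw, of_apply, diagonal_apply, ite_and]

theorem rsw_mul_rsw (M N : ℕ) : rsw M N * rsw M N = rsw M N := by
  rw [rsw_eq_diagonal, diagonal_mul_diagonal]
  congr 1
  ext i
  split_ifs <;> simp

theorem rsw_transpose (M N : ℕ) : (rsw M N)ᵀ = rsw M N := by
  rw [rsw_eq_diagonal, diagonal_transpose]

theorem rsw_map_star (M N : ℕ) : (rsw M N).map (starRingEnd ℂ) = rsw M N := by
  rw [rsw_eq_diagonal, diagonal_map (map_zero _)]
  congr 1
  ext i
  split_ifs <;> simp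

theorem rsw_mul_shiftMat_mul_rsw (M N : ℕ) (hN : Even N) :
    rsw M N * shiftMat M N * rsw M N = 0 := by
  ext i j
  have hN0 : 0 < N := Nat.pos_of_ne_zero fun h => by simpa [h] using i.isLt
  rw [rsw_eq_diagonal, mul_diagonal, diagonal_mul, Matrix.zero_apply, shiftMat, of_apply]
  split_ifs with hi hij hj <;> try simp
  have := add_half_mod_lt_half hN0 hN hi
  rw [hij, Nat.mod_mod_of_dvd _ (dvd_mul_left N M)] at hj
  omega

theorem bkId_mul_rsw_mul_bkId (M N : ℕ) (hN : Even N) :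
    bkId (M * N) * rsw M N * bkId (M * N) = 1 - rsw M N := by
  rw [bkId_mul, mul_bkId, submatrix_submatrix, rsw_eq_diagonal]
  change (diagonal _).submatrix Fin.revPerm Fin.revPerm = _
  rw [submatrix_diagonal_equiv, ← diagonal_one, diagonal_sub]
  congr 1
  ext i
  have hrev : i.rev.1 % N = N - 1 - i.1 % N := by
    rw [Fin.val_rev, sub_add_one_mod_of_dvd (dvd_mul_left N M) i.isLt]
  have hlt : i.1 % N < N := Nat.mod_lt _ (Nat.pos_of_ne_zero fun h => by simpa [h] using i.isLt)
  obtain ⟨q, rfl⟩ := hN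
  simp only [Function.comp_apply, Fin.revPerm_apply, hrev]
  generalize i.1 % (q + q) = r at *
  split_ifs <;> norm_num <;> omega

theorem freshInv_fresh_general (M N : ℕ) (hNe : Even N)
    (x : Fin (M * N) → ℂ) :
    freshInv M N (fresh M N x) = x :=
  properizer_inverse (conjTranspose_cdft_mul_cdft _) (cdft_transpose _) (bkId_mul_cdft _)
    (bkId_mul_bkId _) (rsw_mul_rsw M N) (rsw_transpose M N) (rsw_map_star M N)
    (shiftMat_map_star M N) (shiftMat_transpose_mul_self M N) (rsw_mul_shiftMat_mul_rsw M N hNe)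
    (bkId_mul_rsw_mul_bkId M N hNe) rfl

/-- the asymptotic FRESH properizer is inverted by `freshInv`:
`f⁻¹(f(x)) = x` for every `x ∈ ℂ^{MN}`. -/
theorem freshInv_fresh (M N : ℕ) (hM : 0 < M) (hN : 0 < N) (hNe : Even N)
    (x : Fin (M * N) → ℂ) :
    freshInv M N (fresh M N x) = x :=
  freshInv_fresh_general M N hNe x
end

section
/- Let M be a positive integer and N a positive even integer. For every x ∈ ℂ^{MN}, the output of the asymptotic FRESH properizer has the same Euclidean norm as the input: ‖f(x)‖ = ‖x‖. -/
open Matrix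

/-
With `y = W x`, conjugate symmetry of the centered DFT (`conj W_{m,n} = W_{L+1-m,n}`) gives
`W conj(x) = conj(y ∘ rev)`. Hence the vector `G y + S G W conj(x)` equals `y_i` on the upper half
of each length-`N` block and `conj(y_{τ i})` on the lower half, where `τ i = rev (i + N/2)`.
Because `N` is even and divides `MN`, the shift by `N/2` and the reversal each swap the two halves
of a block, so the permutation `τ` preserves the lower halves; the vector is therefore a
rearrangement of `y` up to conjugation and has the norm of `y`. Unitarity of `W` then gives
`‖f(x)‖ = ‖y‖ = ‖x‖`.
-/

open Complex
open scoped Real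

theorem norm_toLp_mulVec_of_mem_unitaryGroup {n 𝕜 : Type*} [Fintype n] [DecidableEq n] [RCLike 𝕜]
    {A : Matrix n n 𝕜} (hA : A ∈ unitaryGroup n 𝕜) (v : n → 𝕜) :
    ‖(WithLp.toLp 2 (A *ᵥ v) : EuclideanSpace 𝕜 n)‖ = ‖(WithLp.toLp 2 v : EuclideanSpace 𝕜 n)‖ := by
  have hU : toEuclideanCLM (n := n) (𝕜 := 𝕜) A ∈ unitary _ := Unitary.map_mem _ hA
  exact ContinuousLinearMap.norm_map_of_mem_unitary hU (WithLp.toLp 2 v)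

theorem Equiv.Perm.sum_ite_comp_of_forall_iff {ι M : Type*} [Fintype ι] [AddCommMonoid M]
    (p : ι → Prop) [DecidablePred p] (τ : Equiv.Perm ι) (hτ : ∀ i, p (τ i) ↔ p i) (g : ι → M) :
    ∑ i, (if p i then g i else g (τ i)) = ∑ i, g i := by
  calc ∑ i, (if p i then g i else g (τ i))
      = ∑ i, (if p i then g i else 0) + ∑ i, (if p (τ i) then 0 else g (τ i)) := by
        rw [← Finset.sum_add_distrib]
        refine Finset.sum_congr rfl fun i _ => ?_
        by_cases h : p i <;> simp [h, hτ]
    _ = ∑ i, (if p i then g i else 0) + ∑ i, (if p i then 0 else g i) := by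
        rw [Equiv.sum_comp τ (fun j => if p j then 0 else g j)]
    _ = ∑ i, g i := by
        rw [← Finset.sum_add_distrib]
        refine Finset.sum_congr rfl fun i _ => ?_
        by_cases h : p i <;> simp [h]

theorem norm_toLp_ite_star_comp_perm {ι 𝕜 : Type*} [Fintype ι] [RCLike 𝕜]
    (p : ι → Prop) [DecidablePred p] (τ : Equiv.Perm ι) (hτ : ∀ i, p (τ i) ↔ p i) (y : ι → 𝕜) :
    ‖(WithLp.toLp 2 (fun i => if p i then y i else star (y (τ i))) : EuclideanSpace 𝕜 ι)‖ =
      ‖(WithLp.toLp 2 y : EuclideanSpace 𝕜 ι)‖ := by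
  simp only [EuclideanSpace.norm_eq]
  congr 1
  convert Equiv.Perm.sum_ite_comp_of_forall_iff p τ hτ (fun i => ‖y i‖ ^ 2) using 2 with i
  split_ifs <;> simp only [norm_star]

theorem Nat.half_le_add_half_mod_iff {N : ℕ} (hN : Even N) (hN0 : 0 < N) (i : ℕ) :
    N / 2 ≤ (i + N / 2) % N ↔ ¬ N / 2 ≤ i % N := by
  obtain ⟨r, rfl⟩ := hN
  have := Nat.mod_lt i hN0
  rw [Nat.add_mod_eq_ite, Nat.mod_eq_of_lt (show (r + r) / 2 < r + r by omega)]
  split_ifs <;> omega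

theorem Nat.sub_succ_mod_of_dvd {N L i : ℕ} (hNL : N ∣ L) (hN0 : 0 < N) (hi : i < L) :
    (L - (i + 1)) % N = N - 1 - i % N := by
  have hmod := Nat.mod_lt i hN0
  have hcomplement : N - 1 - i % N + (i + 1) = N * (i / N + 1) := by
    have := Nat.div_add_mod i N
    rw [mul_add]; omega
  have hmodEq : L - (i + 1) ≡ N - 1 - i % N [MOD N] := by
    refine Nat.ModEq.add_right_cancel' (i + 1) ?_
    rw [Nat.sub_add_cancel hi, hcomplement]
    exact (Nat.modEq_zero_iff_dvd.2 hNL).trans (Nat.modEq_zero_iff_dvd.2 (dvd_mul_right _ _)).symm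
  rw [hmodEq, Nat.mod_eq_of_lt (by omega)]

section UpperHalf

variable {L N : ℕ}

theorem half_le_rev_mod_iff (hN : Even N) (hNL : N ∣ L) (i : Fin L) :
    N / 2 ≤ i.rev.1 % N ↔ ¬ N / 2 ≤ i.1 % N := by
  have hN0 : 0 < N := Nat.pos_of_dvd_of_pos hNL i.pos
  obtain ⟨r, rfl⟩ := hN
  rw [Fin.val_rev, Nat.sub_succ_mod_of_dvd hNL hN0 i.2]
  omega

theorem half_le_add_half_mod_iff [NeZero L] (hN : Even N) (hNL : N ∣ L) (i : Fin L) :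
    N / 2 ≤ (i + Fin.ofNat L (N / 2)).1 % N ↔ ¬ N / 2 ≤ i.1 % N := by
  have hN0 : 0 < N := Nat.pos_of_dvd_of_pos hNL (Nat.pos_of_ne_zero (NeZero.ne L))
  rw [Fin.val_add, Fin.val_ofNat, Nat.add_mod_mod, Nat.mod_mod_of_dvd _ hNL]
  exact Nat.half_le_add_half_mod_iff hN hN0 i

def revAddHalf (L N : ℕ) [NeZero L] : Equiv.Perm (Fin L) :=
  (Equiv.addRight (Fin.ofNat L (N / 2))).trans Fin.revPerm

theorem half_le_revAddHalf_mod_iff [NeZero L] (hN : Even N) (hNL : N ∣ L) (i : Fin L) :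
    N / 2 ≤ (revAddHalf L N i).1 % N ↔ N / 2 ≤ i.1 % N := by
  rw [revAddHalf, Equiv.trans_apply, Fin.revPerm_apply, half_le_rev_mod_iff hN hNL,
    Equiv.coe_addRight, half_le_add_half_mod_iff hN hNL, not_not]

end UpperHalf

section CenteredDFT

variable {L : ℕ}

theorem star_cdft (m n : Fin L) : star (cdft L m n) = cdft L m.rev n := by
  have hrev : ((m.rev : ℕ) : ℂ) + 1 - ((L : ℂ) + 1) / 2 = -((m : ℂ) + 1 - ((L : ℂ) + 1) / 2) := by
    rw [Fin.val_rev, Nat.cast_sub m.2]; push_cast; ring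
  simp only [cdft, of_apply, star_mul', star_def, conj_ofReal, ← exp_conj, map_div₀, map_mul,
    map_neg, map_sub, map_add, map_one, map_ofNat, conj_I, conj_natCast, hrev]
  ring_nf

theorem star_cdft_mul_cdft (k m n : Fin L) :
    star (cdft L k m) * cdft L k n =
      1 / L * exp (-(π * I) * (L - 1) * (m - n) / L) * exp (2 * π * I * (m - n) / L) ^ (k : ℕ) := by
  have hrev : ((k.rev : ℕ) : ℂ) = L - (k + 1) := by rw [Fin.val_rev, Nat.cast_sub k.2]; push_cast; ring
  have hsq : ((1 / √L : ℝ) : ℂ) * ((1 / √L : ℝ) : ℂ) = 1 / L := by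
    rw [← ofReal_mul, div_mul_div_comm, one_mul, Real.mul_self_sqrt (Nat.cast_nonneg L)]; push_cast; rfl
  rw [star_cdft]
  simp only [cdft, of_apply]
  rw [mul_mul_mul_comm, hsq, ← exp_add, ← exp_nat_mul, mul_assoc (1 / (L : ℂ)), ← exp_add, hrev]
  ring_nf

theorem geom_sum_exp_sub_div_eq_zero {m n : Fin L} (hmn : m ≠ n) :
    ∑ k ∈ Finset.range L, exp (2 * π * I * (m - n) / L) ^ k = 0 := by
  have hL : L ≠ 0 := by rintro rfl; exact m.elim0
  have hζ := isPrimitiveRoot_exp L hL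
  set ζ := exp (2 * π * I / L)
  have hω : exp (2 * π * I * (m - n) / L) = ζ ^ ((m : ℤ) - n) := by
    rw [← exp_int_mul]; push_cast; ring_nf
  set ω := ζ ^ ((m : ℤ) - n)
  have hωL : ω ^ L = 1 := by
    rw [← zpow_natCast, ← _root_.zpow_mul, mul_comm ((m : ℤ) - n), _root_.zpow_mul, zpow_natCast,
      hζ.pow_eq_one, _root_.one_zpow]
  have hω1 : ω ≠ 1 := by
    rw [Ne, hζ.zpow_eq_one_iff_dvd]
    intro hdvd
    have := Int.eq_zero_of_abs_lt_dvd hdvd (abs_sub_lt_iff.mpr ⟨by omega, by omega⟩)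
    exact hmn (Fin.ext (by omega))
  rw [hω, geom_sum_eq hω1, hωL, sub_self, zero_div]

theorem cdft_mem_unitaryGroup [NeZero L] : cdft L ∈ unitaryGroup (Fin L) ℂ := by
  rw [mem_unitaryGroup_iff']
  ext m n
  simp only [star_eq_conjTranspose, mul_apply, conjTranspose_apply, star_cdft_mul_cdft]
  rw [← Finset.mul_sum, Fin.sum_univ_eq_sum_range (fun k => exp (2 * π * I * (m - n) / L) ^ k)]
  rcases eq_or_ne m n with rfl | hmn
  · simp [NeZero.ne L]
  · rw [one_apply_ne hmn, geom_sum_exp_sub_div_eq_zero hmn, mul_zero]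

theorem cdft_mulVec_star (x : Fin L → ℂ) :
    cdft L *ᵥ star x = fun j => star ((cdft L *ᵥ x) j.rev) := by
  ext j
  simp only [mulVec, dotProduct, star_sum, star_mul', star_cdft, Fin.rev_rev, Pi.star_apply, mul_comm]

end CenteredDFT

section Fresh

variable {M N : ℕ}

theorem rsw_mulVec_apply (w : Fin (M * N) → ℂ) (i : Fin (M * N)) :
    (rsw M N *ᵥ w) i = if N / 2 ≤ i.1 % N then w i else 0 := by
  simp [rsw, mulVec, dotProduct, ite_and]

theorem shiftMat_mulVec_apply [NeZero (M * N)] (w : Fin (M * N) → ℂ) (i : Fin (M * N)) :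
    (shiftMat M N *ᵥ w) i = w (i + Fin.ofNat (M * N) (N / 2)) := by
  have hentry : ∀ j, shiftMat M N i j = if j = i + Fin.ofNat (M * N) (N / 2) then 1 else 0 := by
    intro j
    simp [shiftMat, Fin.ext_iff, Fin.val_add]
  simp [mulVec, dotProduct, hentry]

theorem fresh_eq_conjTranspose_cdft_mulVec [NeZero (M * N)] (hN : Even N) (x : Fin (M * N) → ℂ) :
    fresh M N x = (cdft (M * N))ᴴ *ᵥ fun i =>
      if N / 2 ≤ i.1 % N then (cdft (M * N) *ᵥ x) i
      else star ((cdft (M * N) *ᵥ x) (revAddHalf (M * N) N i)) := by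
  unfold fresh
  congr 1
  ext i
  rw [Pi.add_apply, ← mulVec_mulVec, mul_assoc, ← mulVec_mulVec, ← mulVec_mulVec,
    shiftMat_mulVec_apply, rsw_mulVec_apply, rsw_mulVec_apply, cdft_mulVec_star]
  simp only [half_le_add_half_mod_iff hN (dvd_mul_left N M)]
  split_ifs <;> simp [revAddHalf]

end Fresh

/-- the asymptotic FRESH properizer preserves the Euclidean norm:
`‖f(x)‖ = ‖x‖` for every `x ∈ ℂ^{MN}`. -/
theorem norm_fresh (M N : ℕ) (hM : 0 < M) (hN : 0 < N) (hNe : Even N)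
    (x : EuclideanSpace ℂ (Fin (M * N))) :
    ‖(show EuclideanSpace ℂ (Fin (M * N)) from WithLp.toLp 2 (fresh M N (fun i => x i)))‖ = ‖x‖ := by
  have : NeZero (M * N) := ⟨(Nat.mul_pos hM hN).ne'⟩
  have hW := cdft_mem_unitaryGroup (L := M * N)
  have hWstar : (cdft (M * N))ᴴ ∈ unitaryGroup _ ℂ := Unitary.star_mem hW
  rw [fresh_eq_conjTranspose_cdft_mulVec hNe, norm_toLp_mulVec_of_mem_unitaryGroup hWstar,
    norm_toLp_ite_star_comp_perm _ _ (half_le_revAddHalf_mod_iff hNe (dvd_mul_left N M)),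
    norm_toLp_mulVec_of_mem_unitaryGroup hW]
end

section
/- Let M be a positive integer and N a positive even integer. Then Ḡ_{M,N} · (1_{2M} ⊗ I_N) · Ḡ_{M,N}ᵀ = 1_{2M} ⊗ I_{N/2}. -/
open Matrix

/-- `Ḡ_{M,N} = [G_{M,N}  S_{M,N}·G_{M,N}]`, an `MN × 2MN` matrix with columns
indexed by `Fin (MN) ⊕ Fin (MN)`. -/
noncomputable def gbar (M N : ℕ) : Matrix (Fin (M * N)) (Fin (M * N) ⊕ Fin (M * N)) ℂ :=
  Matrix.fromCols (rsw M N) (shiftMat M N * rsw M N)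

/-- The natural 0-based index (in `{0, …, 2L−1}`) of an element of `Fin L ⊕ Fin L`. -/
def sidx (L : ℕ) : Fin L ⊕ Fin L → ℕ
  | Sum.inl k => k.1
  | Sum.inr k => L + k.1

/-- The `2MN × 2MN` matrix `1_{2M} ⊗ I_N` (indexed by `Fin (MN) ⊕ Fin (MN)`):
its `(i,j)` entry is `1` exactly when `i ≡ j (mod N)`. -/
def maskI2 (M N : ℕ) : Matrix (Fin (M * N) ⊕ Fin (M * N)) (Fin (M * N) ⊕ Fin (M * N)) ℂ :=
  Matrix.of fun i j => if sidx (M * N) i % N = sidx (M * N) j % N then 1 else 0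

/-- The `2MN × 2MN` matrix `1_{2M} ⊗ P_N` (indexed by `Fin (MN) ⊕ Fin (MN)`):
its `(i,j)` entry is `1` exactly when `(i mod N) + (j mod N) = N − 1`. -/
def maskP2 (M N : ℕ) : Matrix (Fin (M * N) ⊕ Fin (M * N)) (Fin (M * N) ⊕ Fin (M * N)) ℂ :=
  Matrix.of fun i j => if sidx (M * N) i % N + sidx (M * N) j % N + 1 = N then 1 else 0

/-- The `MN × MN` matrix `1_{2M} ⊗ I_{N/2}`: its `(i,j)` entry is `1` exactly
when `i ≡ j (mod N/2)`. -/
def maskIhalf (M N : ℕ) : Matrix (Fin (M * N)) (Fin (M * N)) ℂ :=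
  Matrix.of fun i j : Fin (M * N) => if i.1 % (N / 2) = j.1 % (N / 2) then 1 else 0

/-! Each row `i` of `Ḡ_{M,N}` is a standard basis row `e_{c i}`, where `c = gbarCol M N` picks
column `i` of the block `G` if `i mod N ≥ N/2` and column `i + N/2` of the block `S G` otherwise:
for even `N` the shift by `N/2` swaps the two halves of every length-`N` block. Hence
`Ḡ A Ḡᵀ = A (c ·) (c ·)`, and since the index of `c i` among the `2MN` columns is congruent to
`i mod N/2 + N/2` modulo `N`, the entry of `1_{2M} ⊗ I_N` at `(c i, c j)` is that of
`1_{2M} ⊗ I_{N/2}` at `(i, j)`. -/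

theorem Nat.mod_two_mul_eq_ite (a k : ℕ) :
    a % (2 * k) = if k ≤ a % (2 * k) then a % k + k else a % k := by
  have hdecomp : a % (2 * k) = a % k + k * (a / k % 2) := by rw [mul_comm, Nat.mod_mul]
  rcases Nat.eq_zero_or_pos k with rfl | hk
  · simp
  have hlt := Nat.mod_lt a hk
  rcases Nat.mod_two_eq_zero_or_one (a / k) with h | h <;> rw [h] at hdecomp <;> split_ifs <;> omega

theorem Nat.add_mod_two_mul_eq_ite (a : ℕ) {k : ℕ} (hk : 0 < k) :
    (a + k) % (2 * k) = if k ≤ a % (2 * k) then a % k else a % k + k := by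
  have hk2 : k % (2 * k) = k := Nat.mod_eq_of_lt (by omega)
  have hlt : a % (2 * k) < 2 * k := Nat.mod_lt a (by omega)
  have hsplit := Nat.mod_two_mul_eq_ite a k
  rw [Nat.add_mod_eq_ite, hk2]
  split_ifs at hsplit ⊢ <;> omega

theorem Matrix.one_submatrix_id_mul {l m n α : Type*} [Fintype m] [DecidableEq m]
    [NonAssocSemiring α] (f : l → m) (A : Matrix m n α) :
    (1 : Matrix m m α).submatrix f id * A = A.submatrix f id := by
  simpa using one_submatrix_mul f (Equiv.refl m) A

theorem Matrix.one_submatrix_mul_mul_transpose {l m α : Type*} [Fintype m] [DecidableEq m]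
    [NonAssocSemiring α] (f : l → m) (A : Matrix m m α) :
    (1 : Matrix m m α).submatrix f id * A * ((1 : Matrix m m α).submatrix f id)ᵀ =
      A.submatrix f f := by
  have hr := mul_submatrix_one (Equiv.refl m) f (A.submatrix f id)
  simp only [Equiv.coe_refl, Equiv.refl_symm, Function.id_comp] at hr
  rw [one_submatrix_id_mul, transpose_submatrix, transpose_one, hr, submatrix_submatrix]
  rfl

section

variable {M N : ℕ}

def shiftIdx (M N : ℕ) (i : Fin (M * N)) : Fin (M * N) :=
  ⟨(i + N / 2) % (M * N), Nat.mod_lt _ i.pos⟩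

theorem shiftIdx_mod (i : Fin (M * N)) : (shiftIdx M N i : ℕ) % N = (i + N / 2) % N :=
  Nat.mod_mod_of_dvd _ (dvd_mul_left N M)

theorem shiftMat_eq_one_submatrix :
    shiftMat M N = (1 : Matrix (Fin (M * N)) (Fin (M * N)) ℂ).submatrix (shiftIdx M N) id := by
  ext i j
  simp [shiftMat, shiftIdx, one_apply, Fin.ext_iff, eq_comm]

def gbarCol (M N : ℕ) (i : Fin (M * N)) : Fin (M * N) ⊕ Fin (M * N) :=
  if N / 2 ≤ i.1 % N then Sum.inl i else Sum.inr (shiftIdx M N i)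

theorem half_le_shiftIdx_mod_iff (hN : Even N) (i : Fin (M * N)) :
    N / 2 ≤ (shiftIdx M N i : ℕ) % N ↔ ¬ N / 2 ≤ (i : ℕ) % N := by
  obtain ⟨k, rfl⟩ := even_iff_exists_two_mul.mp hN
  have hk : 0 < k := Nat.pos_of_ne_zero (by rintro rfl; simpa using i.pos)
  rw [shiftIdx_mod, Nat.mul_div_cancel_left k two_pos, Nat.add_mod_two_mul_eq_ite _ hk]
  have := Nat.mod_lt i.1 hk
  split_ifs <;> omega

theorem gbar_eq_one_submatrix (hN : Even N) :
    gbar M N = (1 : Matrix (Fin (M * N) ⊕ Fin (M * N)) _ ℂ).submatrix (gbarCol M N) id := by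
  rw [gbar, shiftMat_eq_one_submatrix, Matrix.one_submatrix_id_mul]
  ext i (k | k) <;> by_cases hi : N / 2 ≤ (i : ℕ) % N
  all_goals simp [rsw, gbarCol, one_apply, hi, half_le_shiftIdx_mod_iff hN]

theorem sidx_gbarCol_mod (hN : Even N) (i : Fin (M * N)) :
    sidx (M * N) (gbarCol M N i) % N = i % (N / 2) + N / 2 := by
  obtain ⟨k, rfl⟩ := even_iff_exists_two_mul.mp hN
  have hk : 0 < k := Nat.pos_of_ne_zero (by rintro rfl; simpa using i.pos)
  unfold gbarCol
  rw [Nat.mul_div_cancel_left k two_pos]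
  split_ifs with hi
  · rw [sidx, Nat.mod_two_mul_eq_ite, if_pos hi]
  · rw [sidx, Nat.mul_add_mod_self_right, shiftIdx_mod, Nat.mul_div_cancel_left k two_pos,
      Nat.add_mod_two_mul_eq_ite _ hk, if_neg hi]

end

theorem gbar_maskI2_gbar_transpose_general (M N : ℕ) (hNe : Even N) :
    gbar M N * maskI2 M N * (gbar M N)ᵀ = maskIhalf M N := by
  rw [gbar_eq_one_submatrix hNe, Matrix.one_submatrix_mul_mul_transpose]
  ext i j
  simp [maskI2, maskIhalf, sidx_gbarCol_mod hNe]

/-- `Ḡ_{M,N} · (1_{2M} ⊗ I_N) · Ḡ_{M,N}ᵀ = 1_{2M} ⊗ I_{N/2}`. -/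
theorem gbar_maskI2_gbar_transpose (M N : ℕ) (hM : 0 < M) (hN : 0 < N) (hNe : Even N) :
    gbar M N * maskI2 M N * (gbar M N)ᵀ = maskIhalf M N :=
  gbar_maskI2_gbar_transpose_general M N hNe
end

section
/- Let M be a positive integer and N a positive even integer. Then Ḡ_{M,N} · (1_{2M} ⊗ P_N) · Ḡ_{M,N}ᵀ = O_{MN}, the MN×MN all-zero matrix. -/
open Matrix

/-!
Every nonzero column of `Ḡ_{M,N}` has its index congruent mod `N` to a residue in the upper half
`[N/2, N)`, since both blocks `G` and `S G` inherit the column support of the diagonal mask `G`.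
The mask `1_{2M} ⊗ P_N` only pairs residues `r, s` with `r + s = N - 1`, which cannot both lie in
the upper half when `N` is even. Hence every term of every entry of `Ḡ (1_{2M} ⊗ P_N) Ḡᵀ` vanishes.
-/

theorem Matrix.mul_mul_transpose_eq_zero_of_col_support {m n R : Type*} [Fintype n]
    [NonUnitalNonAssocSemiring R] {A C : Matrix m n R} {B : Matrix n n R} (p : n → Prop)
    (hA : ∀ i a, A i a ≠ 0 → p a) (hC : ∀ j b, C j b ≠ 0 → p b)
    (hB : ∀ a b, p a → p b → B a b = 0) :
    A * B * Cᵀ = 0 := by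
  ext i j
  simp only [mul_apply, transpose_apply, zero_apply, Finset.sum_mul]
  refine Finset.sum_eq_zero fun b _ => Finset.sum_eq_zero fun a _ => ?_
  by_cases ha : A i a = 0
  · simp [ha]
  by_cases hc : C j b = 0
  · simp [hc]
  simp [hB a b (hA i a ha) (hC j b hc)]

lemma half_le_mod_of_rsw_apply_ne_zero {M N : ℕ} {i k : Fin (M * N)} (h : rsw M N i k ≠ 0) :
    N / 2 ≤ k.1 % N := by
  simp only [rsw, of_apply, ne_eq, ite_eq_right_iff, one_ne_zero, imp_false, not_not] at h
  exact h.1 ▸ h.2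

lemma half_le_sidx_mod_of_gbar_apply_ne_zero {M N : ℕ} {i : Fin (M * N)}
    {a : Fin (M * N) ⊕ Fin (M * N)} (h : gbar M N i a ≠ 0) : N / 2 ≤ sidx (M * N) a % N := by
  cases a with
  | inl k => exact half_le_mod_of_rsw_apply_ne_zero h
  | inr k =>
    rw [gbar, fromCols_apply_inr, mul_apply] at h
    obtain ⟨m, -, hm⟩ := Finset.exists_ne_zero_of_sum_ne_zero h
    have hk := half_le_mod_of_rsw_apply_ne_zero (right_ne_zero_of_mul hm)
    rwa [sidx, Nat.add_mod, Nat.mul_mod_left, zero_add, Nat.mod_mod]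

lemma maskP2_apply_eq_zero_of_half_le {M N : ℕ} (hN : Even N) {a b : Fin (M * N) ⊕ Fin (M * N)}
    (ha : N / 2 ≤ sidx (M * N) a % N) (hb : N / 2 ≤ sidx (M * N) b % N) :
    maskP2 M N a b = 0 := by
  obtain ⟨h, rfl⟩ := hN
  rw [maskP2, of_apply, if_neg]
  omega

theorem gbar_maskP2_gbar_transpose_general (M N : ℕ) (hNe : Even N) :
    gbar M N * maskP2 M N * (gbar M N)ᵀ = 0 :=
  mul_mul_transpose_eq_zero_of_col_support (fun a => N / 2 ≤ sidx (M * N) a % N)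
    (fun _ _ => half_le_sidx_mod_of_gbar_apply_ne_zero)
    (fun _ _ => half_le_sidx_mod_of_gbar_apply_ne_zero)
    (fun _ _ => maskP2_apply_eq_zero_of_half_le hNe)

/-- `Ḡ_{M,N} · (1_{2M} ⊗ P_N) · Ḡ_{M,N}ᵀ = O_{MN}`. -/
theorem gbar_maskP2_gbar_transpose (M N : ℕ) (hM : 0 < M) (hN : 0 < N) (hNe : Even N) :
    gbar M N * maskP2 M N * (gbar M N)ᵀ = 0 :=
  gbar_maskP2_gbar_transpose_general M N hNe
end

section
/- Let M be a positive integer, N a positive even integer, and σ > 0 a real number. Let R be an MN×MN Hermitian positive semidefinite complex matrix and set Σ := R ⊙ (1_{2M} ⊗ I_{N/2}). Then σ²I_{MN} + Σ is invertible and tr( R − 2·Σ(σ²I_{MN} + Σ)⁻¹R + Σ(σ²I_{MN} + Σ)⁻¹(σ²I_{MN} + R)(σ²I_{MN} + Σ)⁻¹Σ ) = tr( Σ − Σ(σ²I_{MN} + Σ)⁻¹Σ ). -/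
/-! The mask keeps exactly the entries of `R` inside the blocks of the partition `i ↦ i mod N/2`.
Matrices supported on these blocks form an algebra, which therefore contains `P = (σ²I + Σ)⁻¹`
and every product of `Σ` and `P`; and against such a matrix `B` the trace cannot tell `R` from
`Σ`: `tr (B R) = tr (B Σ)`. So every `R` on the left may be replaced by `Σ`, after which
`P (σ²I + Σ) = I` collapses the cubic term to `tr (Σ P Σ)`. -/

open Matrix ComplexOrder

namespace Matrix

variable {n α R : Type*}

def blockMask [Zero R] [One R] [DecidableEq α] (b : n → α) : Matrix n n R :=
  of fun i j => if b i = b j then 1 else 0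

def IsBlockDiagonal [Zero R] (A : Matrix n n R) (b : n → α) : Prop :=
  ∀ i j, b i ≠ b j → A i j = 0

@[simp]
theorem blockMask_apply [Zero R] [One R] [DecidableEq α] (b : n → α) (i j : n) :
    (blockMask b : Matrix n n R) i j = if b i = b j then 1 else 0 := rfl

theorem isBlockDiagonal_hadamard_blockMask [MulZeroOneClass R] [DecidableEq α]
    (A : Matrix n n R) (b : n → α) : (A ⊙ blockMask b).IsBlockDiagonal b :=
  fun i j hij => by simp [hij]

theorem isBlockDiagonal_smul_one [DecidableEq n] [MulZeroOneClass R] {b : n → α} (c : R) :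
    (c • 1 : Matrix n n R).IsBlockDiagonal b :=
  fun i j hij => by simp [one_apply_ne (ne_of_apply_ne b hij)]

theorem IsBlockDiagonal.add [AddZeroClass R] {b : n → α} {A B : Matrix n n R}
    (hA : A.IsBlockDiagonal b) (hB : B.IsBlockDiagonal b) : (A + B).IsBlockDiagonal b :=
  fun i j hij => by simp [hA i j hij, hB i j hij]

theorem IsBlockDiagonal.mul [Fintype n] [NonUnitalNonAssocSemiring R] {b : n → α}
    {A B : Matrix n n R} (hA : A.IsBlockDiagonal b) (hB : B.IsBlockDiagonal b) :
    (A * B).IsBlockDiagonal b :=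
  fun i j hij => Finset.sum_eq_zero fun k _ => by
    by_cases hik : b i = b k
    · simp [hB k j (hik ▸ hij)]
    · simp [hA i k hik]

theorem isBlockDiagonal_iff_blockTriangular [Zero R] [LinearOrder α] {b : n → α}
    {A : Matrix n n R} :
    A.IsBlockDiagonal b ↔ A.BlockTriangular b ∧ A.BlockTriangular (OrderDual.toDual ∘ b) :=
  ⟨fun h => ⟨fun _ _ hij => h _ _ hij.ne',
      fun _ _ hij => h _ _ (OrderDual.toDual_lt_toDual.mp hij).ne⟩,
    fun h _ _ hij => hij.lt_or_gt.elim
      (fun hlt => h.2 (OrderDual.toDual_lt_toDual.mpr hlt)) (h.1 ·)⟩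

theorem IsBlockDiagonal.inv [Fintype n] [DecidableEq n] [CommRing R] [LinearOrder α]
    {b : n → α} {A : Matrix n n R} (hA : A.IsBlockDiagonal b) : A⁻¹.IsBlockDiagonal b := by
  by_cases hdet : IsUnit A.det
  · have := invertibleOfIsUnitDet A hdet
    obtain ⟨h, h'⟩ := isBlockDiagonal_iff_blockTriangular.mp hA
    exact isBlockDiagonal_iff_blockTriangular.mpr
      ⟨blockTriangular_inv_of_blockTriangular h, blockTriangular_inv_of_blockTriangular h'⟩
  · rw [nonsing_inv_apply_not_isUnit A hdet]
    exact fun _ _ _ => rfl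

theorem posSemidef_blockMask {𝕜 : Type*} [RCLike 𝕜] [Fintype n] [DecidableEq α] (b : n → α) :
    (blockMask b : Matrix n n 𝕜).PosSemidef := by
  let B : Matrix n (Set.range b) 𝕜 := of fun i r => if b i = r then 1 else 0
  convert posSemidef_self_mul_conjTranspose B
  ext i j
  simp only [blockMask_apply, mul_apply, conjTranspose_apply, B, of_apply, apply_ite star,
    star_one, star_zero, mul_ite, mul_one, mul_zero]
  rw [Fintype.sum_eq_single ⟨b i, i, rfl⟩]
  · simp [eq_comm]
  · intro r hr
    simp only [ne_eq, Subtype.ext_iff] at hr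
    simp [Ne.symm hr]

theorem smul_one_add_hadamard_blockMask [DecidableEq n] [CommSemiring R] [DecidableEq α]
    {b : n → α} (c : R) (A : Matrix n n R) :
    (c • 1 + A) ⊙ blockMask b = c • 1 + A ⊙ blockMask b := by
  rw [add_hadamard, smul_hadamard, one_hadamard]
  congr 2
  ext i j
  simp [diagonal_apply, one_apply]

section CommSemiring

variable [Fintype n] [CommSemiring R] [DecidableEq α] {b : n → α}

theorem trace_hadamard_blockMask (A : Matrix n n R) : trace (A ⊙ blockMask b) = trace A := by
  simp [trace]

theorem IsBlockDiagonal.trace_mul_hadamard_blockMask {B : Matrix n n R}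
    (hB : B.IsBlockDiagonal b) (A : Matrix n n R) :
    trace (B * (A ⊙ blockMask b)) = trace (B * A) := by
  simp only [trace, diag, mul_apply]
  refine Finset.sum_congr rfl fun i _ => Finset.sum_congr rfl fun j _ => ?_
  by_cases hij : b i = b j
  · simp [hij]
  · simp [hB i j hij]

theorem trace_mul_hadamard_blockMask_mul {X Y : Matrix n n R}
    (hYX : (Y * X).IsBlockDiagonal b) (A : Matrix n n R) :
    trace (X * (A ⊙ blockMask b) * Y) = trace (X * A * Y) := by
  rw [trace_mul_cycle, hYX.trace_mul_hadamard_blockMask, ← trace_mul_cycle]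

end CommSemiring

theorem trace_mse_hadamard_blockMask [Fintype n] [DecidableEq n] [CommRing R] [LinearOrder α]
    (b : n → α) (c : R) (A : Matrix n n R) (hS : IsUnit (c • 1 + A ⊙ blockMask b)) :
    trace (A - (2 : R) • (A ⊙ blockMask b * (c • 1 + A ⊙ blockMask b)⁻¹ * A)
        + A ⊙ blockMask b * (c • 1 + A ⊙ blockMask b)⁻¹ * (c • 1 + A) *
          (c • 1 + A ⊙ blockMask b)⁻¹ * A ⊙ blockMask b)
      = trace (A ⊙ blockMask b
        - A ⊙ blockMask b * (c • 1 + A ⊙ blockMask b)⁻¹ * A ⊙ blockMask b) := by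
  set D := A ⊙ blockMask b
  set P := (c • 1 + D)⁻¹
  have hD : D.IsBlockDiagonal b := isBlockDiagonal_hadamard_blockMask A b
  have hP : P.IsBlockDiagonal b := ((isBlockDiagonal_smul_one c).add hD).inv
  have hPS : P * (c • 1 + D) = 1 := nonsing_inv_mul _ ((isUnit_iff_isUnit_det _).mp hS)
  have h₁ : trace (D * P * A) = trace (D * P * D) :=
    ((hD.mul hP).trace_mul_hadamard_blockMask A).symm
  have h₂ : trace (D * P * (c • 1 + A) * P * D) = trace (D * P * D) := by
    have hPDDP : (P * D * (D * P)).IsBlockDiagonal b := (hP.mul hD).mul (hD.mul hP)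
    rw [mul_assoc _ P D, ← trace_mul_hadamard_blockMask_mul hPDDP,
      smul_one_add_hadamard_blockMask, mul_assoc D P, hPS, mul_one, mul_assoc]
  rw [trace_add, trace_sub, trace_smul, h₁, h₂, trace_sub, trace_hadamard_blockMask,
    smul_eq_mul]
  ring

end Matrix

theorem trace_mse_identity_general (M N : ℕ) (σ : ℝ) (hσ : 0 < σ)
    (R : Matrix (Fin (M * N)) (Fin (M * N)) ℂ) (hR : R.PosSemidef) :
    IsUnit ((σ : ℂ) ^ 2 • (1 : Matrix (Fin (M * N)) (Fin (M * N)) ℂ) +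
        Matrix.hadamard R (maskIhalf M N)) ∧
    Matrix.trace (R
        - (2 : ℂ) • (Matrix.hadamard R (maskIhalf M N) *
            ((σ : ℂ) ^ 2 • 1 + Matrix.hadamard R (maskIhalf M N))⁻¹ * R)
        + Matrix.hadamard R (maskIhalf M N) *
            ((σ : ℂ) ^ 2 • 1 + Matrix.hadamard R (maskIhalf M N))⁻¹ *
            ((σ : ℂ) ^ 2 • 1 + R) *
            ((σ : ℂ) ^ 2 • 1 + Matrix.hadamard R (maskIhalf M N))⁻¹ *
            Matrix.hadamard R (maskIhalf M N))
      = Matrix.trace (Matrix.hadamard R (maskIhalf M N)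
        - Matrix.hadamard R (maskIhalf M N) *
            ((σ : ℂ) ^ 2 • 1 + Matrix.hadamard R (maskIhalf M N))⁻¹ *
            Matrix.hadamard R (maskIhalf M N)) := by
  have hσ₂ : (0 : ℂ) < (σ : ℂ) ^ 2 := by exact_mod_cast pow_pos hσ 2
  have hS : IsUnit ((σ : ℂ) ^ 2 • (1 : Matrix (Fin (M * N)) (Fin (M * N)) ℂ) +
      R ⊙ blockMask fun i : Fin (M * N) => i.1 % (N / 2)) :=
    ((PosDef.one.smul hσ₂).add_posSemidef (hR.hadamard (posSemidef_blockMask _))).isUnit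
  exact ⟨hS, trace_mse_hadamard_blockMask _ _ R hS⟩

/-- for `σ > 0` and an `MN × MN` Hermitian positive semidefinite
matrix `R`, with `Σ = R ⊙ (1_{2M} ⊗ I_{N/2})`, the matrix `σ²I + Σ` is
invertible and
`tr(R − 2Σ(σ²I+Σ)⁻¹R + Σ(σ²I+Σ)⁻¹(σ²I+R)(σ²I+Σ)⁻¹Σ) = tr(Σ − Σ(σ²I+Σ)⁻¹Σ)`. -/
theorem trace_mse_identity (M N : ℕ) (hM : 0 < M) (hN : 0 < N) (hNe : Even N)
    (σ : ℝ) (hσ : 0 < σ)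
    (R : Matrix (Fin (M * N)) (Fin (M * N)) ℂ) (hR : R.PosSemidef) :
    IsUnit ((σ : ℂ) ^ 2 • (1 : Matrix (Fin (M * N)) (Fin (M * N)) ℂ) +
        Matrix.hadamard R (maskIhalf M N)) ∧
    Matrix.trace (R
        - (2 : ℂ) • (Matrix.hadamard R (maskIhalf M N) *
            ((σ : ℂ) ^ 2 • 1 + Matrix.hadamard R (maskIhalf M N))⁻¹ * R)
        + Matrix.hadamard R (maskIhalf M N) *
            ((σ : ℂ) ^ 2 • 1 + Matrix.hadamard R (maskIhalf M N))⁻¹ *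
            ((σ : ℂ) ^ 2 • 1 + R) *
            ((σ : ℂ) ^ 2 • 1 + Matrix.hadamard R (maskIhalf M N))⁻¹ *
            Matrix.hadamard R (maskIhalf M N))
      = Matrix.trace (Matrix.hadamard R (maskIhalf M N)
        - Matrix.hadamard R (maskIhalf M N) *
            ((σ : ℂ) ^ 2 • 1 + Matrix.hadamard R (maskIhalf M N))⁻¹ *
            Matrix.hadamard R (maskIhalf M N)) :=
  trace_mse_identity_general M N σ hσ R hR
end
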